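/- arXiv:2405.03948 — 5 statements merged into one kernel-verified Lean document; each statement's English description precedes it below -/
import Mathlib

section
/- Fix V ≥ 0 and δ ∈ [0,1). For p ∈ (0,1) define D(p) = [2e^{V}/(1+2e^{V}) + (δ/(1-δ))·2e^{V}/(1+2e^{V})] - [(1-p)·(e^{V}+e^{-1})/(1+e^{V}+e^{-1}) + p·(e^{V}+e^{(1-p)/p})/(1+e^{V}+e^{(1-p)/p}) + (δ/(1-δ))·( p·2e^{(1-p)/p}/(1+2e^{(1-p)/p}) + (1-p)·2e^{V}/(1+2e^{V}) )]. Then D(p) tends, as p → 0⁺, to 2e^{V}/(1+2e^{V}) - (e^{V}+e^{-1})/(1+e^{V}+e^{-1}), and this limit is strictly positive. -/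
/-!
The niche item is good only with probability `p`, and every engagement probability lies in
`[0, 1]`, so the terms `p · (…)` vanish as `p → 0⁺` however large `(1 - p)/p` becomes; the
continuation values then coincide. What is left is the first-period gap, which is positive
because `s ↦ s / (1 + s)` is strictly increasing and `e^V + e^{-1} < 2 e^V`.
-/

open Real Filter Topology

lemma div_one_add_lt_div_one_add {s t : ℝ} (hs : 0 ≤ s) (hst : s < t) :
    s / (1 + s) < t / (1 + t) := by
  rw [div_lt_div_iff₀ (by linarith) (by linarith)]
  linarith

lemma Filter.Tendsto.mul_div_of_nonneg_of_le {ι : Type*} {l : Filter ι} {g a c : ι → ℝ}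
    (hg : Tendsto g l (𝓝 0)) (ha : ∀ x, 0 ≤ a x) (hac : ∀ x, a x ≤ c x) :
    Tendsto (fun x => g x * (a x / c x)) l (𝓝 0) := by
  refine hg.zero_mul_isBoundedUnder_le (isBoundedUnder_of ⟨1, fun x => ?_⟩)
  have hc : 0 ≤ c x := (ha x).trans (hac x)
  rw [Function.comp_apply, Real.norm_of_nonneg (div_nonneg (ha x) hc)]
  exact div_le_one_of_le₀ (hac x) hc

theorem app_engagement_optimal_limit_general (V δ : ℝ) (hV : 0 ≤ V) :
    Tendsto (fun p : ℝ =>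
        (2 * Real.exp V / (1 + 2 * Real.exp V)
            + (δ / (1 - δ)) * (2 * Real.exp V / (1 + 2 * Real.exp V)))
        - ((1 - p) * ((Real.exp V + Real.exp (-1)) / (1 + Real.exp V + Real.exp (-1)))
            + p * ((Real.exp V + Real.exp ((1 - p) / p))
                / (1 + Real.exp V + Real.exp ((1 - p) / p)))
            + (δ / (1 - δ)) *
                (p * (2 * Real.exp ((1 - p) / p) / (1 + 2 * Real.exp ((1 - p) / p)))
                  + (1 - p) * (2 * Real.exp V / (1 + 2 * Real.exp V)))))
      (𝓝[>] (0 : ℝ))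
      (𝓝 (2 * Real.exp V / (1 + 2 * Real.exp V)
            - (Real.exp V + Real.exp (-1)) / (1 + Real.exp V + Real.exp (-1))))
    ∧ 0 < 2 * Real.exp V / (1 + 2 * Real.exp V)
            - (Real.exp V + Real.exp (-1)) / (1 + Real.exp V + Real.exp (-1)) := by
  set A := 2 * exp V / (1 + 2 * exp V)
  set B := (exp V + exp (-1)) / (1 + exp V + exp (-1))
  have hp : Tendsto (fun p : ℝ => p) (𝓝[>] 0) (𝓝 0) :=
    tendsto_nhdsWithin_of_tendsto_nhds tendsto_id
  have hq : Tendsto (fun p : ℝ => 1 - p) (𝓝[>] 0) (𝓝 1) := by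
    simpa using tendsto_const_nhds (x := (1 : ℝ)) |>.sub hp
  have hnicheNow := hp.mul_div_of_nonneg_of_le
    (a := fun p => exp V + exp ((1 - p) / p)) (c := fun p => 1 + exp V + exp ((1 - p) / p))
    (fun p => by positivity) (fun p => by linarith)
  have hnicheLater := hp.mul_div_of_nonneg_of_le
    (a := fun p => 2 * exp ((1 - p) / p)) (c := fun p => 1 + 2 * exp ((1 - p) / p))
    (fun p => by positivity) (fun p => by linarith)
  refine ⟨?_, sub_pos.2 ?_⟩
  · have hlim := tendsto_const_nhds (x := A + δ / (1 - δ) * A) |>.sub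
      (((hq.mul_const B).add hnicheNow).add
        ((hnicheLater.add (hq.mul_const A)).const_mul (δ / (1 - δ))))
    convert hlim using 2
    ring
  · have hgap : exp V + exp (-1) < 2 * exp V := by
      linarith [exp_lt_exp.2 (show -1 < V by linarith)]
    have hmono := div_one_add_lt_div_one_add (by positivity) hgap
    rwa [← add_assoc] at hmono

/-- Engagement gap between the Always Popular Policy and the exploration-based upper bound:
as `p → 0⁺`, `D(p)` tends to `2e^V/(1+2e^V) - (e^V+e^{-1})/(1+e^V+e^{-1})`, which is
strictly positive. Here `V ≥ 0` and `δ ∈ [0,1)`. -/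
theorem app_engagement_optimal_limit (V δ : ℝ) (hV : 0 ≤ V) (hδ : δ ∈ Set.Ico (0 : ℝ) 1) :
    Tendsto (fun p : ℝ =>
        (2 * Real.exp V / (1 + 2 * Real.exp V)
            + (δ / (1 - δ)) * (2 * Real.exp V / (1 + 2 * Real.exp V)))
        - ((1 - p) * ((Real.exp V + Real.exp (-1)) / (1 + Real.exp V + Real.exp (-1)))
            + p * ((Real.exp V + Real.exp ((1 - p) / p))
                / (1 + Real.exp V + Real.exp ((1 - p) / p)))
            + (δ / (1 - δ)) *
                (p * (2 * Real.exp ((1 - p) / p) / (1 + 2 * Real.exp ((1 - p) / p)))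
                  + (1 - p) * (2 * Real.exp V / (1 + 2 * Real.exp V)))))
      (𝓝[>] (0 : ℝ))
      (𝓝 (2 * Real.exp V / (1 + 2 * Real.exp V)
            - (Real.exp V + Real.exp (-1)) / (1 + Real.exp V + Real.exp (-1))))
    ∧ 0 < 2 * Real.exp V / (1 + 2 * Real.exp V)
            - (Real.exp V + Real.exp (-1)) / (1 + Real.exp V + Real.exp (-1)) :=
  app_engagement_optimal_limit_general V δ hV
end

section
/- Let p ∈ (0,1), let 0 < ρ₂ < ρ₁ < 1, and set c = ln((1-ρ₂)/(1-ρ₁)) / ( ln(ρ₁/ρ₂) + ln((1-ρ₂)/(1-ρ₁)) ). Then for all natural numbers S and F, the inequality ( 1 + ((1-p)/p) · ρ₂^{S}(1-ρ₂)^{F} / (ρ₁^{S}(1-ρ₁)^{F}) )^{-1} < p holds if and only if S·(1-c) - F·c < 0. -/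
open Real

/-- Posterior-threshold equivalence (Lemma 1 of the paper): for `p ∈ (0,1)`,
`0 < ρ₂ < ρ₁ < 1` and `c = ln((1-ρ₂)/(1-ρ₁)) / (ln(ρ₁/ρ₂) + ln((1-ρ₂)/(1-ρ₁)))`, the
Bayesian posterior `(1 + ((1-p)/p)·ρ₂^S(1-ρ₂)^F/(ρ₁^S(1-ρ₁)^F))⁻¹` is below the prior `p`
iff `S(1-c) - Fc < 0`. -/
theorem posterior_below_prior_iff (p ρ₁ ρ₂ c : ℝ) (hp : p ∈ Set.Ioo (0 : ℝ) 1)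
    (hρ₂ : 0 < ρ₂) (hρ : ρ₂ < ρ₁) (hρ₁ : ρ₁ < 1)
    (hc : c = Real.log ((1 - ρ₂) / (1 - ρ₁))
        / (Real.log (ρ₁ / ρ₂) + Real.log ((1 - ρ₂) / (1 - ρ₁)))) :
    ∀ S F : ℕ,
      (1 + ((1 - p) / p) * (ρ₂ ^ S * (1 - ρ₂) ^ F) / (ρ₁ ^ S * (1 - ρ₁) ^ F))⁻¹ < p ↔
        (S : ℝ) * (1 - c) - (F : ℝ) * c < 0 := by
  obtain ⟨hp0, hp1⟩ := hp
  have h1p : 0 < 1 - p := by linarith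
  have hρ₁0 : 0 < ρ₁ := lt_trans hρ₂ hρ
  have h1ρ₁ : 0 < 1 - ρ₁ := by linarith
  have h1ρ₂ : 0 < 1 - ρ₂ := by linarith
  set a := Real.log (ρ₁ / ρ₂) with hadef
  set b := Real.log ((1 - ρ₂) / (1 - ρ₁)) with hbdef
  have ha : 0 < a := Real.log_pos ((one_lt_div hρ₂).2 hρ)
  have hb : 0 < b := Real.log_pos ((one_lt_div h1ρ₁).2 (by linarith))
  have hab : 0 < a + b := by linarith
  intro S F
  set R : ℝ := (ρ₂ ^ S * (1 - ρ₂) ^ F) / (ρ₁ ^ S * (1 - ρ₁) ^ F) with hRdef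
  have hR : 0 < R := by positivity
  have hrw : ((1 - p) / p) * (ρ₂ ^ S * (1 - ρ₂) ^ F) / (ρ₁ ^ S * (1 - ρ₁) ^ F)
      = ((1 - p) / p) * R := by rw [hRdef, mul_div_assoc]
  rw [hrw]
  have hpos : 0 < 1 + (1 - p) / p * R := by
    have := mul_pos (div_pos h1p hp0) hR
    linarith
  have step1 : (1 + (1 - p) / p * R)⁻¹ < p ↔ 1 < R := by
    rw [← one_div, div_lt_iff₀ hpos]
    have hx : p * (1 + (1 - p) / p * R) = p + (1 - p) * R := by
      field_simp
    rw [hx]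
    constructor <;> intro h <;> nlinarith
  have hlogR : Real.log R = -((S : ℝ) * a) + (F : ℝ) * b := by
    rw [hRdef, Real.log_div (by positivity) (by positivity),
      Real.log_mul (by positivity) (by positivity),
      Real.log_mul (by positivity) (by positivity),
      Real.log_pow, Real.log_pow, Real.log_pow, Real.log_pow,
      hadef, hbdef, Real.log_div (ne_of_gt hρ₁0) (ne_of_gt hρ₂),
      Real.log_div (ne_of_gt h1ρ₂) (ne_of_gt h1ρ₁)]
    ring
  have step2 : (1 < R) ↔ 0 < Real.log R := (Real.log_pos_iff hR.le).symm
  have heq : (S : ℝ) * (1 - c) - (F : ℝ) * c = ((S : ℝ) * a - (F : ℝ) * b) / (a + b) := by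
    rw [hc]
    field_simp
    ring
  rw [step1, step2, hlogR, heq]
  constructor
  · intro h
    exact div_neg_of_neg_of_pos (by linarith) hab
  · intro h
    have h2 := mul_neg_of_neg_of_pos h hab
    rw [div_mul_cancel₀ _ (ne_of_gt hab)] at h2
    linarith
end

section
/- Fix V ≥ 0 and δ ∈ [0,1). For p ∈ (0,1) define ρ₁(p) = e^{(1-p)/p}/(1 + e^{V} + e^{(1-p)/p}), ρ₂ = e^{-1}/(1 + e^{V} + e^{-1}), and c(p) = ln((1-ρ₂)/(1-ρ₁(p))) / ( ln(ρ₁(p)/ρ₂) + ln((1-ρ₂)/(1-ρ₁(p))) ). For ρ, x ∈ (0,1), let (X_k)_{k ≥ 1} be i.i.d. random variables taking value 1-x with probability ρ and -x with probability 1-ρ (realized on the countable product measure), let N(ρ,x) = sInf{ n ≥ 1 : Σ_{k=1}^{n} X_k < 0 }, and define g(δ, ρ, x) = E[1 - δ^{N(ρ,x)}], with the convention δ^{∞} = 0. Then g(δ, ρ₁(p), c(p)) → 1 as p → 0⁺. -/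
open MeasureTheory Real Filter Topology

/-- The `k`-th step of the random walk: `1 - x` on success (`ω k = true`), `-x` on failure. -/
noncomputable def walkStep (x : ℝ) (ω : ℕ → Bool) (k : ℕ) : ℝ :=
  if ω k then 1 - x else -x

/-- `N(x)(ω) = inf { n ≥ 1 : ∑_{k=1}^n X_k(ω) < 0 }`, the first time the partial sums of
the walk with steps in `{1-x, -x}` go strictly below zero (`⊤` if this never happens). -/
noncomputable def hitTime (x : ℝ) (ω : ℕ → Bool) : ℕ∞ :=
  sInf {m : ℕ∞ | ∃ n : ℕ, m = (n : ℕ∞) ∧ 1 ≤ n ∧ ∑ k ∈ Finset.Icc 1 n, walkStep x ω k < 0}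

/-- `δ^t` for an extended natural number `t`, with the convention `δ^∞ = 0`. -/
noncomputable def discPow (δ : ℝ) (t : ℕ∞) : ℝ :=
  if t = ⊤ then 0 else δ ^ t.toNat

/-- `ρ₁(p) = e^{(1-p)/p} / (1 + e^V + e^{(1-p)/p})`. -/
noncomputable def nicheRho1 (V p : ℝ) : ℝ :=
  Real.exp ((1 - p) / p) / (1 + Real.exp V + Real.exp ((1 - p) / p))

/-- `ρ₂ = e^{-1} / (1 + e^V + e^{-1})`. -/
noncomputable def nicheRho2 (V : ℝ) : ℝ :=
  Real.exp (-1) / (1 + Real.exp V + Real.exp (-1))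

/-- `c(p) = ln((1-ρ₂)/(1-ρ₁(p))) / ( ln(ρ₁(p)/ρ₂) + ln((1-ρ₂)/(1-ρ₁(p))) )`. -/
noncomputable def thresholdC (V p : ℝ) : ℝ :=
  Real.log ((1 - nicheRho2 V) / (1 - nicheRho1 V p))
    / (Real.log (nicheRho1 V p / nicheRho2 V)
        + Real.log ((1 - nicheRho2 V) / (1 - nicheRho1 V p)))


section PEARAux

open MeasureTheory Real Filter Topology

lemma walkSum_measurable (x : ℝ) (n : ℕ) :
    Measurable (fun ω : ℕ → Bool => ∑ k ∈ Finset.Icc 1 n, walkStep x ω k) := by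
  apply Finset.measurable_sum
  intro k _
  exact (measurable_of_countable (fun b : Bool => if b then 1 - x else -x)).comp
    (measurable_pi_apply k)

lemma hitTime_le_iff (x : ℝ) (ω : ℕ → Bool) (n : ℕ) :
    hitTime x ω ≤ (n : ℕ∞) ↔
      ∃ m, 1 ≤ m ∧ m ≤ n ∧ ∑ k ∈ Finset.Icc 1 m, walkStep x ω k < 0 := by
  constructor
  · intro h
    by_contra hc
    push_neg at hc
    have hlb : (n : ℕ∞) + 1 ≤ hitTime x ω := by
      apply le_sInf
      rintro m ⟨m', rfl, hm1, hsum⟩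
      have hnm : n < m' := by
        by_contra hn
        push_neg at hn
        exact absurd hsum (not_lt.mpr (hc m' hm1 hn))
      have : ((n + 1 : ℕ) : ℕ∞) ≤ (m' : ℕ∞) := by
        exact_mod_cast Nat.succ_le_of_lt hnm
      simpa using this
    have hlt : (n : ℕ∞) < (n : ℕ∞) + 1 := by
      have : ((n : ℕ) : ℕ∞) < ((n + 1 : ℕ) : ℕ∞) := by
        exact_mod_cast Nat.lt_succ_self n
      simpa using this
    exact absurd h (not_le.mpr (lt_of_lt_of_le hlt hlb))
  · rintro ⟨m, hm1, hmn, hsum⟩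
    exact le_trans (sInf_le ⟨m, rfl, hm1, hsum⟩) (by exact_mod_cast hmn)

lemma measurableSet_hitTime_le (x : ℝ) (n : ℕ) :
    MeasurableSet {ω : ℕ → Bool | hitTime x ω ≤ (n : ℕ∞)} := by
  have hset : {ω : ℕ → Bool | hitTime x ω ≤ (n : ℕ∞)}
      = ⋃ m ∈ Finset.Icc 1 n, {ω : ℕ → Bool | ∑ k ∈ Finset.Icc 1 m, walkStep x ω k < 0} := by
    ext ω
    simp only [Set.mem_setOf_eq, Set.mem_iUnion, Finset.mem_Icc, hitTime_le_iff,
      exists_prop]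
    tauto
  rw [hset]
  exact (Finset.Icc 1 n).measurableSet_biUnion fun m _ =>
    measurableSet_lt (walkSum_measurable x m) measurable_const

lemma measurable_hitTime (x : ℝ) : Measurable (hitTime x) := by
  apply measurable_to_countable'
  intro t
  induction t using ENat.recTopCoe with
  | top =>
    have hset : hitTime x ⁻¹' {⊤} = (⋃ n : ℕ, {ω : ℕ → Bool | hitTime x ω ≤ (n : ℕ∞)})ᶜ := by
      ext ω
      simp only [Set.mem_preimage, Set.mem_singleton_iff, Set.mem_compl_iff, Set.mem_iUnion,
        Set.mem_setOf_eq]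
      constructor
      · rintro h ⟨n, hn⟩
        rw [h] at hn
        exact absurd hn (by simp)
      · intro h
        by_contra ht
        obtain ⟨m, hm⟩ := Option.ne_none_iff_exists'.mp ht
        exact h ⟨m, le_of_eq hm⟩
    rw [hset]
    exact (MeasurableSet.iUnion fun n => measurableSet_hitTime_le x n).compl
  | coe n =>
    cases n with
    | zero =>
      have hset : hitTime x ⁻¹' {((0 : ℕ) : ℕ∞)} = {ω : ℕ → Bool | hitTime x ω ≤ ((0:ℕ) : ℕ∞)} := by
        ext ω
        simp only [Set.mem_preimage, Set.mem_singleton_iff, Set.mem_setOf_eq, Nat.cast_zero]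
        exact ⟨le_of_eq, fun h => le_antisymm h zero_le⟩
      rw [hset]
      exact measurableSet_hitTime_le x 0
    | succ n =>
      have hset : hitTime x ⁻¹' {((n + 1 : ℕ) : ℕ∞)} =
          {ω : ℕ → Bool | hitTime x ω ≤ ((n + 1 : ℕ) : ℕ∞)}
            ∩ {ω : ℕ → Bool | hitTime x ω ≤ (n : ℕ∞)}ᶜ := by
        ext ω
        simp only [Set.mem_preimage, Set.mem_singleton_iff, Set.mem_inter_iff,
          Set.mem_compl_iff, Set.mem_setOf_eq]
        constructor
        · intro h
          rw [h]
          refine ⟨le_refl _, not_le.mpr ?_⟩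
          exact_mod_cast Nat.lt_succ_self n
        · rintro ⟨h1, h2⟩
          have h2' : (n : ℕ∞) < hitTime x ω := not_le.mp h2
          have hge : ((n + 1 : ℕ) : ℕ∞) ≤ hitTime x ω := by
            have := (ENat.add_one_le_iff (m := (n : ℕ∞)) (by simp)).mpr h2'
            simpa using this
          exact le_antisymm h1 hge
      rw [hset]
      exact (measurableSet_hitTime_le x (n + 1)).inter (measurableSet_hitTime_le x n).compl

lemma discPow_nonneg {δ : ℝ} (hδ : 0 ≤ δ) (t : ℕ∞) : 0 ≤ discPow δ t := by
  unfold discPow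
  split
  · norm_num
  · positivity

lemma discPow_le_one {δ : ℝ} (h0 : 0 ≤ δ) (h1 : δ ≤ 1) (t : ℕ∞) : discPow δ t ≤ 1 := by
  unfold discPow
  split
  · norm_num
  · exact pow_le_one₀ h0 h1

lemma discPow_hitTime_le {δ x : ℝ} (h0 : 0 ≤ δ) (h1 : δ < 1) (hx : x ≤ 1) (n : ℕ)
    (ω : ℕ → Bool) (hω : ∀ k ∈ Finset.Icc 1 n, ω k = true) :
    discPow δ (hitTime x ω) ≤ δ ^ n := by
  have hnot : ¬ hitTime x ω ≤ (n : ℕ∞) := by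
    rw [hitTime_le_iff]
    rintro ⟨m, hm1, hmn, hsum⟩
    have hsum' : ∑ k ∈ Finset.Icc 1 m, walkStep x ω k = (m : ℝ) * (1 - x) := by
      have hstep : ∀ k ∈ Finset.Icc 1 m, walkStep x ω k = 1 - x := by
        intro k hk
        have hkm := Finset.mem_Icc.mp hk
        have hk' : ω k = true := hω k (Finset.mem_Icc.mpr ⟨hkm.1, le_trans hkm.2 hmn⟩)
        simp [walkStep, hk']
      rw [Finset.sum_congr rfl hstep, Finset.sum_const, Nat.card_Icc]
      simp [nsmul_eq_mul]
    rw [hsum'] at hsum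
    exact absurd hsum (not_lt.mpr (mul_nonneg (Nat.cast_nonneg m) (by linarith)))
  rcases eq_or_ne (hitTime x ω) ⊤ with ht | ht
  · rw [discPow, if_pos ht]
    positivity
  · obtain ⟨m, hm⟩ : ∃ m : ℕ, hitTime x ω = (m : ℕ∞) := Option.ne_none_iff_exists'.mp ht
    have hnm : n < m := by
      have h' : (n : ℕ∞) < hitTime x ω := not_le.mp hnot
      rw [hm] at h'
      exact_mod_cast h'
    have heq : discPow δ (hitTime x ω) = δ ^ m := by
      rw [hm, discPow, if_neg (by simp)]
      simp
    rw [heq]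
    exact pow_le_pow_of_le_one h0 h1.le hnm.le

lemma nicheRho1_mem (V p : ℝ) : nicheRho1 V p ∈ Set.Ioo (0:ℝ) 1 := by
  unfold nicheRho1
  constructor
  · positivity
  · rw [div_lt_one (by positivity)]
    linarith [Real.exp_pos V]

lemma nicheRho2_mem (V : ℝ) : nicheRho2 V ∈ Set.Ioo (0:ℝ) 1 := by
  unfold nicheRho2
  constructor
  · positivity
  · rw [div_lt_one (by positivity)]
    linarith [Real.exp_pos V]

lemma rho2_lt_rho1 (V : ℝ) {p : ℝ} (hp : p ∈ Set.Ioo (0:ℝ) 1) :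
    nicheRho2 V < nicheRho1 V p := by
  have hy : (-1 : ℝ) < (1 - p) / p := by
    have : 0 < (1 - p) / p := div_pos (by linarith [hp.2]) hp.1
    linarith
  have he : Real.exp (-1) < Real.exp ((1 - p) / p) := Real.exp_lt_exp.mpr hy
  unfold nicheRho1 nicheRho2
  rw [div_lt_div_iff₀ (by positivity) (by positivity)]
  nlinarith [Real.exp_pos (-1 : ℝ), Real.exp_pos ((1 - p) / p), Real.exp_pos V]

lemma thresholdC_le_one (V : ℝ) {p : ℝ} (hp : p ∈ Set.Ioo (0:ℝ) 1) :
    thresholdC V p ≤ 1 := by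
  have h1 := nicheRho1_mem V p
  have h2 := nicheRho2_mem V
  have h12 := rho2_lt_rho1 V hp
  have hL1 : 0 < Real.log (nicheRho1 V p / nicheRho2 V) :=
    Real.log_pos ((one_lt_div h2.1).mpr h12)
  have hL2 : 0 < Real.log ((1 - nicheRho2 V) / (1 - nicheRho1 V p)) :=
    Real.log_pos ((one_lt_div (by linarith [h1.2])).mpr (by linarith))
  unfold thresholdC
  rw [div_le_one (by linarith)]
  linarith

lemma rho1_tendsto (V : ℝ) : Tendsto (fun p => nicheRho1 V p) (𝓝[>] (0:ℝ)) (𝓝 1) := by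
  have hy : Tendsto (fun p : ℝ => (1 - p) / p) (𝓝[>] (0:ℝ)) atTop := by
    have h1 : Tendsto (fun p : ℝ => p⁻¹ + (-1)) (𝓝[>] (0:ℝ)) atTop :=
      tendsto_atTop_add_const_right _ _ tendsto_inv_nhdsGT_zero
    refine h1.congr' ?_
    filter_upwards [self_mem_nhdsWithin] with p hp
    have hp0 : p ≠ 0 := ne_of_gt hp
    field_simp
    ring
  have hexp : Tendsto (fun p : ℝ => Real.exp ((1 - p) / p)) (𝓝[>] (0:ℝ)) atTop :=
    Real.tendsto_exp_atTop.comp hy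
  have key : Tendsto (fun t : ℝ => t / (1 + Real.exp V + t)) atTop (𝓝 1) := by
    have h0 : Tendsto (fun t : ℝ => (1 + Real.exp V) / (1 + Real.exp V + t)) atTop (𝓝 0) :=
      Tendsto.div_atTop tendsto_const_nhds (tendsto_atTop_add_const_left _ _ tendsto_id)
    have h1 : Tendsto (fun t : ℝ => 1 - (1 + Real.exp V) / (1 + Real.exp V + t)) atTop
        (𝓝 (1 - 0)) := tendsto_const_nhds.sub h0
    rw [sub_zero] at h1
    refine h1.congr' ?_
    filter_upwards [eventually_gt_atTop (0:ℝ)] with t ht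
    have hD : (1 + Real.exp V + t) ≠ 0 := by positivity
    field_simp
    ring
  have := key.comp hexp
  exact this.congr fun p => rfl

end PEARAux

/-- Lemma 2 of the paper, first limit: fix `V ≥ 0` and `δ ∈ [0,1)`. For `ρ ∈ (0,1)` let
`μ ρ` be the countable product of Bernoulli(ρ) measures (characterized by its cylinder
probabilities), under which the steps `X_k` are i.i.d., equal to `1-x` with probability `ρ`
and `-x` with probability `1-ρ`; let `N(ρ,x)` be the first time the partial sums go below
zero and `g(δ,ρ,x) = E[1 - δ^{N(ρ,x)}]` (with `δ^∞ = 0`). Then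
`g(δ, ρ₁(p), c(p)) → 1` as `p → 0⁺`. -/
theorem g_rho1_limit (V δ : ℝ) (hV : 0 ≤ V) (hδ : δ ∈ Set.Ico (0 : ℝ) 1)
    (μ : ℝ → Measure (ℕ → Bool)) (hprob : ∀ r, IsProbabilityMeasure (μ r))
    (hμ : ∀ r ∈ Set.Ioo (0 : ℝ) 1, ∀ (s : Finset ℕ) (b : ℕ → Bool),
      μ r {ω | ∀ i ∈ s, ω i = b i}
        = ∏ i ∈ s, (if b i then ENNReal.ofReal r else ENNReal.ofReal (1 - r))) :
    Tendsto
      (fun p : ℝ =>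
        ∫ ω, (1 - discPow δ (hitTime (thresholdC V p) ω)) ∂(μ (nicheRho1 V p)))
      (𝓝[>] (0 : ℝ)) (𝓝 1) := by
  obtain ⟨hδ0, hδ1⟩ := hδ
  rw [Metric.tendsto_nhds]
  intro ε hε
  obtain ⟨n, hn⟩ : ∃ n : ℕ, δ ^ n < ε / 2 :=
    ((tendsto_pow_atTop_nhds_zero_of_lt_one hδ0 hδ1).eventually_lt_const
      (by linarith : (0:ℝ) < ε / 2)).exists
  have h1 : ∀ᶠ p in 𝓝[>] (0:ℝ), p ∈ Set.Ioo (0:ℝ) 1 :=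
    Ioo_mem_nhdsGT_of_mem (by constructor <;> norm_num)
  have h2 : ∀ᶠ p in 𝓝[>] (0:ℝ), (n : ℝ) * (1 - nicheRho1 V p) < ε / 2 := by
    have ht : Tendsto (fun p : ℝ => (n : ℝ) * (1 - nicheRho1 V p)) (𝓝[>] (0:ℝ))
        (𝓝 ((n : ℝ) * (1 - 1))) :=
      (tendsto_const_nhds.sub (rho1_tendsto V)).const_mul _
    rw [sub_self, mul_zero] at ht
    exact ht.eventually_lt_const (by linarith)
  filter_upwards [h1, h2] with p hp hp2
  set r := nicheRho1 V p with hr_def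
  set x := thresholdC V p with hx_def
  have hr : r ∈ Set.Ioo (0:ℝ) 1 := nicheRho1_mem V p
  have hx : x ≤ 1 := thresholdC_le_one V hp
  haveI := hprob r
  set ν := μ r with hν_def
  set F : (ℕ → Bool) → ℝ := fun ω => discPow δ (hitTime x ω) with hF_def
  have hFmeas : Measurable F :=
    (measurable_of_countable (discPow δ)).comp (measurable_hitTime x)
  have hF0 : ∀ ω, 0 ≤ F ω := fun ω => discPow_nonneg hδ0 _
  have hF1 : ∀ ω, F ω ≤ 1 := fun ω => discPow_le_one hδ0 hδ1.le _
  -- the failure set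
  set S : Set (ℕ → Bool) := ⋃ k ∈ Finset.Icc 1 n, {ω : ℕ → Bool | ω k = false} with hS_def
  have hSmeas : MeasurableSet S := by
    refine (Finset.Icc 1 n).measurableSet_biUnion fun k _ => ?_
    have hpre : {ω : ℕ → Bool | ω k = false} = (fun ω : ℕ → Bool => ω k) ⁻¹' {false} := rfl
    rw [hpre]
    exact measurable_pi_apply k (measurableSet_singleton false)
  -- pointwise bound
  have hpt : ∀ ω, F ω ≤ δ ^ n + S.indicator (fun _ => (1:ℝ)) ω := by
    intro ω
    by_cases hω : ω ∈ S
    · rw [Set.indicator_of_mem hω]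
      have : (0:ℝ) ≤ δ ^ n := by positivity
      linarith [hF1 ω]
    · rw [Set.indicator_of_notMem hω, add_zero]
      apply discPow_hitTime_le hδ0 hδ1 hx n ω
      intro k hk
      by_contra hcontra
      apply hω
      simp only [hS_def, Set.mem_iUnion, Set.mem_setOf_eq]
      exact ⟨k, hk, by simpa using hcontra⟩
  -- integrability
  have hFint : Integrable F ν := by
    refine Integrable.mono' (integrable_const 1) hFmeas.aestronglyMeasurable ?_
    filter_upwards with ω
    rw [Real.norm_eq_abs, abs_of_nonneg (hF0 ω)]
    exact hF1 ω
  have hGint : Integrable (fun ω => δ ^ n + S.indicator (fun _ => (1:ℝ)) ω) ν :=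
    (integrable_const _).add ((integrable_const (1:ℝ)).indicator hSmeas)
  -- measure of the failure set
  have hνS : (ν S).toReal ≤ (n : ℝ) * (1 - r) := by
    apply ENNReal.toReal_le_of_le_ofReal (by nlinarith [hr.2, Nat.cast_nonneg (α := ℝ) n])
    have hle : ν S ≤ ∑ k ∈ Finset.Icc 1 n, ν {ω : ℕ → Bool | ω k = false} :=
      measure_biUnion_finset_le _ _
    have heach : ∀ k, ν {ω : ℕ → Bool | ω k = false} = ENNReal.ofReal (1 - r) := by
      intro k
      have := hμ r hr {k} (fun _ => false)
      simp only [Finset.mem_singleton, Finset.prod_singleton, if_false, Bool.false_eq_true,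
        ite_false] at this
      have hseteq : {ω : ℕ → Bool | ∀ i ∈ ({k} : Finset ℕ), ω i = false}
          = {ω : ℕ → Bool | ω k = false} := by
        ext ω; simp
      rw [← hseteq]
      convert this using 2
      simp
    calc ν S ≤ ∑ k ∈ Finset.Icc 1 n, ν {ω : ℕ → Bool | ω k = false} := hle
      _ = (n : ℕ∞) * ENNReal.ofReal (1 - r) := by
          simp only [heach, Finset.sum_const, Nat.card_Icc, Nat.add_sub_cancel, nsmul_eq_mul]
          norm_cast
      _ = ENNReal.ofReal ((n : ℝ) * (1 - r)) := by
          rw [ENNReal.ofReal_mul (Nat.cast_nonneg n), ENNReal.ofReal_natCast]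
          norm_cast
  -- integral bound
  have hIG : ∫ ω, (δ ^ n + S.indicator (fun _ => (1:ℝ)) ω) ∂ν = δ ^ n + (ν S).toReal := by
    rw [integral_add (integrable_const _) ((integrable_const (1:ℝ)).indicator hSmeas),
      integral_const, integral_indicator_const (1:ℝ) hSmeas]
    simp [measure_univ]
    rfl
  have hIF_le : ∫ ω, F ω ∂ν ≤ δ ^ n + (n : ℝ) * (1 - r) := by
    calc ∫ ω, F ω ∂ν ≤ ∫ ω, (δ ^ n + S.indicator (fun _ => (1:ℝ)) ω) ∂ν :=
          integral_mono hFint hGint hpt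
      _ = δ ^ n + (ν S).toReal := hIG
      _ ≤ δ ^ n + (n : ℝ) * (1 - r) := by linarith
  have hIF_nonneg : 0 ≤ ∫ ω, F ω ∂ν := integral_nonneg hF0
  have hsplit : ∫ ω, (1 - F ω) ∂ν = 1 - ∫ ω, F ω ∂ν := by
    rw [integral_sub (integrable_const 1) hFint, integral_const]
    simp [measure_univ]
  show dist (∫ ω, (1 - F ω) ∂ν) 1 < ε
  rw [hsplit, Real.dist_eq]
  rw [show (1 : ℝ) - ∫ ω, F ω ∂ν - 1 = -(∫ ω, F ω ∂ν) by ring, abs_neg,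
    abs_of_nonneg hIF_nonneg]
  calc ∫ ω, F ω ∂ν ≤ δ ^ n + (n : ℝ) * (1 - r) := hIF_le
    _ < ε / 2 + ε / 2 := by exact add_lt_add hn hp2
    _ = ε := by ring
end

section
/- Fix V ≥ 0. For p ∈ (0,1) define ρ₁(p) = e^{(1-p)/p}/(1 + e^{V} + e^{(1-p)/p}), ρ₂ = e^{-1}/(1 + e^{V} + e^{-1}), and M₀(p) = ln((1-ρ₂)/(1-ρ₁(p))) / ln(ρ₁(p)/ρ₂). Then p · M₀(p) → 1/(1 + ln(1 + e^{V} + e^{-1})) as p → 0⁺; in particular M₀(p) → ∞ as p → 0⁺. -/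
open Real Filter Topology

/-- `M₀(p) = ln((1-ρ₂)/(1-ρ₁(p))) / ln(ρ₁(p)/ρ₂)`. -/
noncomputable def M₀ (V p : ℝ) : ℝ :=
  Real.log ((1 - nicheRho2 V) / (1 - nicheRho1 V p)) / Real.log (nicheRho1 V p / nicheRho2 V)

/-- Auxiliary: `L(p) = log (1 + e^V + e^{(1-p)/p})`. -/
noncomputable def nicheL (V p : ℝ) : ℝ :=
  Real.log (1 + Real.exp V + Real.exp ((1 - p) / p))

lemma M0_eq (V p : ℝ) (hp : p ≠ 0) :
    M₀ V p = (nicheL V p - Real.log (1 + Real.exp V + Real.exp (-1))) /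
      ((1 - p) / p + 1 + Real.log (1 + Real.exp V + Real.exp (-1)) - nicheL V p) := by
  set x : ℝ := (1 - p) / p with hx
  have hE : (0:ℝ) < Real.exp x := Real.exp_pos _
  have hA : (0:ℝ) < 1 + Real.exp V + Real.exp (-1) := by positivity
  have hB : (0:ℝ) < 1 + Real.exp V + Real.exp x := by positivity
  have h1 : (1 - nicheRho2 V) / (1 - nicheRho1 V p)
      = (1 + Real.exp V + Real.exp x) / (1 + Real.exp V + Real.exp (-1)) := by
    unfold nicheRho1 nicheRho2
    rw [← hx]
    field_simp
    ring_nf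
    have hV1 : (1 + Real.exp V) ≠ 0 := by positivity
    field_simp
    ring
  have h2 : nicheRho1 V p / nicheRho2 V
      = Real.exp (x + 1) * (1 + Real.exp V + Real.exp (-1)) / (1 + Real.exp V + Real.exp x) := by
    unfold nicheRho1 nicheRho2
    rw [← hx, Real.exp_add, Real.exp_neg]
    field_simp
  unfold M₀ nicheL
  rw [← hx, h1, h2, Real.log_div hB.ne' hA.ne',
    Real.log_div (by positivity) hB.ne', Real.log_mul (Real.exp_ne_zero _) hA.ne',
    Real.log_exp]

/-- For `V ≥ 0`, `p · M₀(p) → 1/(1 + ln(1 + e^V + e^{-1}))` as `p → 0⁺`; in particular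
`M₀(p) → ∞` as `p → 0⁺`. -/
theorem M0_asymptotics (V : ℝ) (hV : 0 ≤ V) :
    Tendsto (fun p : ℝ => p * M₀ V p) (𝓝[>] (0 : ℝ))
        (𝓝 (1 / (1 + Real.log (1 + Real.exp V + Real.exp (-1)))))
    ∧ Tendsto (fun p : ℝ => M₀ V p) (𝓝[>] (0 : ℝ)) atTop := by
  set A : ℝ := 1 + Real.exp V + Real.exp (-1) with hAdef
  have hA1 : (1:ℝ) < A := by
    have := Real.exp_pos V
    have := Real.exp_pos (-1:ℝ)
    linarith
  have hlogA : 0 < Real.log A := Real.log_pos hA1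
  have hden_ne : (1:ℝ) + Real.log A ≠ 0 := by linarith
  set l : Filter ℝ := 𝓝[>] (0:ℝ) with hl
  have hmem : ∀ᶠ p in l, 0 < p := self_mem_nhdsWithin
  -- x(p) → ∞
  have hx : Tendsto (fun p : ℝ => (1 - p) / p) l atTop := by
    have h1 : Tendsto (fun p : ℝ => p⁻¹ + (-1)) l atTop :=
      tendsto_atTop_add_const_right _ _ tendsto_inv_nhdsGT_zero
    refine h1.congr' ?_
    filter_upwards [hmem] with p hp
    field_simp
    ring
  -- L(p) - x(p) → 0
  have hg : Tendsto (fun x : ℝ => Real.log (1 + Real.exp V + Real.exp x) - x) atTop (𝓝 0) := by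
    have heq : ∀ x : ℝ, Real.log (1 + Real.exp V + Real.exp x) - x
        = Real.log ((1 + Real.exp V) * Real.exp (-x) + 1) := by
      intro x
      have hB : (0:ℝ) < 1 + Real.exp V + Real.exp x := by positivity
      nth_rewrite 2 [← Real.log_exp x]
      rw [← Real.log_div hB.ne' (Real.exp_ne_zero x)]
      congr 1
      rw [Real.exp_neg]
      field_simp
    simp only [heq]
    have h1 : Tendsto (fun x : ℝ => (1 + Real.exp V) * Real.exp (-x) + 1) atTop (𝓝 1) := by
      have := (Real.tendsto_exp_neg_atTop_nhds_zero.const_mul (1 + Real.exp V)).add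
        (tendsto_const_nhds (x := (1:ℝ)))
      simpa using this
    have h2 := ((Real.continuousAt_log (by norm_num : (1:ℝ) ≠ 0)).tendsto).comp h1
    simpa [Function.comp_def] using h2
  have hdiff : Tendsto (fun p : ℝ => nicheL V p - (1 - p) / p) l (𝓝 0) := hg.comp hx
  have hp0 : Tendsto (fun p : ℝ => p) l (𝓝 0) :=
    tendsto_id.mono_left nhdsWithin_le_nhds
  -- p * x(p) → 1
  have hpx : Tendsto (fun p : ℝ => p * ((1 - p) / p)) l (𝓝 1) := by
    have h1 : Tendsto (fun p : ℝ => 1 - p) l (𝓝 1) := by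
      simpa using (tendsto_const_nhds (x := (1:ℝ)) (f := l)).sub hp0
    refine h1.congr' ?_
    filter_upwards [hmem] with p hp
    field_simp
  -- p * numerator → 1
  have hnum : Tendsto (fun p : ℝ => p * (nicheL V p - Real.log A)) l (𝓝 1) := by
    have h1 : Tendsto (fun p : ℝ =>
        p * (nicheL V p - (1 - p) / p) + p * ((1 - p) / p) + p * (-Real.log A)) l
        (𝓝 (0 * 0 + 1 + 0 * (-Real.log A))) :=
      ((hp0.mul hdiff).add hpx).add (hp0.mul tendsto_const_nhds)
    simp only [zero_mul, zero_add, add_zero] at h1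
    refine h1.congr fun p => by ring
  -- denominator → 1 + log A
  have hden : Tendsto (fun p : ℝ => (1 - p) / p + 1 + Real.log A - nicheL V p) l
      (𝓝 (1 + Real.log A)) := by
    have h1 : Tendsto (fun p : ℝ => (1 + Real.log A) - (nicheL V p - (1 - p) / p)) l
        (𝓝 ((1 + Real.log A) - 0)) := tendsto_const_nhds.sub hdiff
    rw [sub_zero] at h1
    refine h1.congr fun p => by ring
  constructor
  · have h := hnum.div hden hden_ne
    refine h.congr' ?_
    filter_upwards [hmem] with p hp
    simp only [Pi.div_apply]
    rw [M0_eq V p hp.ne', mul_div_assoc']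
  · -- numerator → ∞
    have hnumtop : Tendsto (fun p : ℝ => nicheL V p - Real.log A) l atTop := by
      have hlb : ∀ᶠ p in l, -Real.log A - 1 ≤ (nicheL V p - (1 - p) / p) - Real.log A := by
        have := hdiff.eventually (eventually_ge_nhds (by norm_num : (-1:ℝ) < 0))
        filter_upwards [this] with p hp
        linarith
      have h1 : Tendsto (fun p : ℝ =>
          (1 - p) / p + ((nicheL V p - (1 - p) / p) - Real.log A)) l atTop :=
        tendsto_atTop_add_right_of_le' _ (-Real.log A - 1) hx hlb
      refine h1.congr fun p => by ring
    have hinv : Tendsto (fun p : ℝ =>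
        ((1 - p) / p + 1 + Real.log A - nicheL V p)⁻¹) l (𝓝 ((1 + Real.log A)⁻¹)) :=
      hden.inv₀ hden_ne
    have h := hnumtop.atTop_mul_pos (by positivity : (0:ℝ) < (1 + Real.log A)⁻¹) hinv
    refine h.congr' ?_
    filter_upwards [hmem] with p hp
    rw [M0_eq V p hp.ne']
    ring
end

section
/- Fix V ≥ 0 and set ρ = 1/(1 + e + e^{V+1}), Ψ₂ = ln(1 + e^{-1} + e^{V}), and Λ = ln(1 + 2e^{V}). Then the ratio [ 1 + ((1-δ)/(1-δρ))·Ψ₂ + (δ(1-ρ)/(1-δρ))·Λ ] / (1 + Λ) tends to 1 as δ → 1⁻ (δ ranging over [0,1)). Consequently, the p → 0 limit of Util(PEAR) divided by the p → 0 limit of Util(OPT) tends to 1 as δ → 1. -/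
open Real Filter Topology

/-! The weights `(1 - δ)/(1 - δρ)` and `δ(1 - ρ)/(1 - δρ)` of `Ψ₂` and `Λ` are continuous at
`δ = 1` as soon as `ρ ≠ 1`, where they equal `0` and `1`; so PEAR's utility ratio tends to
`(1 + Λ)/(1 + Λ) = 1`. -/

section DiscountWeights

variable {ρ : ℝ}

lemma tendsto_one_sub_div_one_sub_mul (hρ : ρ ≠ 1) :
    Tendsto (fun δ : ℝ => (1 - δ) / (1 - δ * ρ)) (𝓝 1) (𝓝 0) := by
  have hden : 1 - ρ ≠ 0 := sub_ne_zero.2 hρ.symm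
  have h : ContinuousAt (fun δ : ℝ => (1 - δ) / (1 - δ * ρ)) 1 := by
    fun_prop (disch := simpa using hden)
  simpa using h.tendsto

lemma tendsto_mul_one_sub_div_one_sub_mul (hρ : ρ ≠ 1) :
    Tendsto (fun δ : ℝ => δ * (1 - ρ) / (1 - δ * ρ)) (𝓝 1) (𝓝 1) := by
  have hden : 1 - ρ ≠ 0 := sub_ne_zero.2 hρ.symm
  have h : ContinuousAt (fun δ : ℝ => δ * (1 - ρ) / (1 - δ * ρ)) 1 := by
    fun_prop (disch := simpa using hden)
  simpa [div_self hden] using h.tendsto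

end DiscountWeights

lemma one_div_one_add_exp_add_exp_ne_one (a b : ℝ) : 1 / (1 + exp a + exp b) ≠ 1 := by
  have hgt : 1 < 1 + exp a + exp b := by linarith [exp_pos a, exp_pos b]
  exact (div_lt_one (by linarith)).2 hgt |>.ne

lemma one_add_log_one_add_two_mul_exp_pos (V : ℝ) : 0 < 1 + log (1 + 2 * exp V) := by
  have hlog : 0 ≤ log (1 + 2 * exp V) := log_nonneg (by linarith [exp_pos V])
  linarith

theorem pear_asymptotically_utility_optimal_general (V : ℝ) :
    Tendsto (fun δ : ℝ =>
        (1 + ((1 - δ) / (1 - δ * (1 / (1 + Real.exp 1 + Real.exp (V + 1)))))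
              * Real.log (1 + Real.exp (-1) + Real.exp V)
          + (δ * (1 - 1 / (1 + Real.exp 1 + Real.exp (V + 1)))
              / (1 - δ * (1 / (1 + Real.exp 1 + Real.exp (V + 1)))))
              * Real.log (1 + 2 * Real.exp V))
        / (1 + Real.log (1 + 2 * Real.exp V)))
      (𝓝[Set.Ico (0 : ℝ) 1] 1) (𝓝 1) := by
  set ρ := 1 / (1 + exp 1 + exp (V + 1))
  set Ψ₂ := log (1 + exp (-1) + exp V)
  set Λ := log (1 + 2 * exp V)
  have hρ : ρ ≠ 1 := one_div_one_add_exp_add_exp_ne_one 1 (V + 1)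
  have hΛ : 1 + Λ ≠ 0 := (one_add_log_one_add_two_mul_exp_pos V).ne'
  have hratio := ((tendsto_const_nhds (x := (1 : ℝ)).add
      ((tendsto_one_sub_div_one_sub_mul hρ).mul_const Ψ₂)).add
      ((tendsto_mul_one_sub_div_one_sub_mul hρ).mul_const Λ)).div_const (1 + Λ)
  rw [zero_mul, add_zero, one_mul, div_self hΛ] at hratio
  exact hratio.mono_left nhdsWithin_le_nhds

/-- Asymptotic optimality of PEAR (Corollary 1 of the paper): with
`ρ = 1/(1 + e + e^{V+1})`, `Ψ₂ = ln(1 + e^{-1} + e^V)` and `Λ = ln(1 + 2e^V)`, the ratio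
of the `p → 0` limits of `Util(PEAR)` and `Util(OPT)`, namely
`[1 + ((1-δ)/(1-δρ))Ψ₂ + (δ(1-ρ)/(1-δρ))Λ] / (1 + Λ)`, tends to `1` as `δ → 1⁻` with
`δ` ranging over `[0,1)`. -/
theorem pear_asymptotically_utility_optimal (V : ℝ) (hV : 0 ≤ V) :
    Tendsto (fun δ : ℝ =>
        (1 + ((1 - δ) / (1 - δ * (1 / (1 + Real.exp 1 + Real.exp (V + 1)))))
              * Real.log (1 + Real.exp (-1) + Real.exp V)
          + (δ * (1 - 1 / (1 + Real.exp 1 + Real.exp (V + 1)))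
              / (1 - δ * (1 / (1 + Real.exp 1 + Real.exp (V + 1)))))
              * Real.log (1 + 2 * Real.exp V))
        / (1 + Real.log (1 + 2 * Real.exp V)))
      (𝓝[Set.Ico (0 : ℝ) 1] 1) (𝓝 1) :=
  pear_asymptotically_utility_optimal_general V
end
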